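/- arXiv:1911.05785 — 4 statements merged into one kernel-verified Lean document; each statement's English description precedes it below -/
import Mathlib

section
/- Let G be a finite group acting on a finite set Ω with no regular orbit, i.e. every ω ∈ Ω is fixed by some nonidentity element of G. Let P be a set of representatives of the conjugacy classes of elements of prime order in G. Then, as an inequality of rational numbers, |Ω| ≤ Σ_{x ∈ P} (1/(o(x) − 1)) · |x^G| · |Fix(x)|, where o(x) denotes the order of x, x^G its conjugacy class, and Fix(x) its fixed-point set in Ω. -/
/-!
Every point `ω` has a nontrivial stabilizer, which therefore contains a subgroup of some prime
order `p`; its `p - 1` nonidentity elements all have order `p`, so counting each element `x` of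
prime order with weight `1 / (o(x) - 1)` gives every point total weight at least `1`. Summing over
`Ω` and exchanging the sums bounds `|Ω|` by `∑ |Fix(x)| / (o(x) - 1)` over all `x` of prime order,
and since `o(x)` and `|Fix(x)|` are constant on conjugacy classes, this sum collapses to the
one over `P` weighted by `|x^G|`.
-/

open Finset MulAction Subgroup
open scoped Classical

section OrderOf

variable {G : Type*} [Group G]

theorem IsConj.orderOf_eq {x y : G} (h : IsConj x y) : orderOf x = orderOf y :=
  let ⟨_, hc⟩ := h
  SemiconjBy.orderOf_eq _ hc

theorem orderOf_eq_of_mem_zpowers_of_ne_one {x y : G} (hx : (orderOf x).Prime)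
    (hy : y ∈ zpowers x) (hy1 : y ≠ 1) : orderOf y = orderOf x :=
  (hx.eq_one_or_self_of_dvd _ (orderOf_dvd_of_mem_zpowers hy)).resolve_left
    (orderOf_eq_one_iff.not.mpr hy1)

theorem Subgroup.exists_mem_orderOf_prime [Finite G] {H : Subgroup G} (hH : H ≠ ⊥) :
    ∃ x ∈ H, (orderOf x).Prime := by
  obtain ⟨⟨g, hgH⟩, hg1⟩ := H.ne_bot_iff_exists_ne_one.mp hH
  have hg : orderOf g ≠ 1 := orderOf_eq_one_iff.not.mpr (by simpa using hg1)
  refine ⟨g ^ (orderOf g / (orderOf g).minFac), H.pow_mem hgH _, ?_⟩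
  rw [orderOf_pow_orderOf_div (orderOf_pos g).ne' (Nat.minFac_dvd _)]
  exact Nat.minFac_prime hg

theorem card_zpowers_toFinset_erase_one [Fintype G] (x : G) :
    ((zpowers x : Set G).toFinset.erase 1).card = orderOf x - 1 := by
  rw [card_erase_of_mem (by simp), Set.toFinset_card, ← Nat.card_eq_fintype_card,
    SetLike.coe_sort_coe, Nat.card_zpowers]

theorem Subgroup.one_le_sum_one_div_orderOf_sub_one [Fintype G] {H : Subgroup G} (hH : H ≠ ⊥) :
    1 ≤ ∑ x with x ∈ H ∧ (orderOf x).Prime, 1 / ((orderOf x : ℚ) - 1) := by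
  obtain ⟨x, hxH, hx⟩ := H.exists_mem_orderOf_prime hH
  set S := (zpowers x : Set G).toFinset.erase 1
  have horder : ∀ y ∈ S, orderOf y = orderOf x := fun y hy => by
    rw [mem_erase, Set.mem_toFinset] at hy
    exact orderOf_eq_of_mem_zpowers_of_ne_one hx hy.2 hy.1
  have hsub : S ⊆ ({y | y ∈ H ∧ (orderOf y).Prime} : Finset G) := fun y hy => by
    have hyx : y ∈ zpowers x := Set.mem_toFinset.mp (mem_of_mem_erase hy)
    exact mem_filter.mpr ⟨mem_univ y, zpowers_le.mpr hxH hyx, horder y hy ▸ hx⟩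
  have hp : (1 : ℚ) < orderOf x := by exact_mod_cast hx.one_lt
  calc (1 : ℚ) = ∑ _y ∈ S, 1 / ((orderOf x : ℚ) - 1) := by
        rw [sum_const, card_zpowers_toFinset_erase_one, nsmul_eq_mul, Nat.cast_pred hx.pos]
        field_simp [sub_ne_zero.mpr hp.ne']
    _ = ∑ y ∈ S, 1 / ((orderOf y : ℚ) - 1) := sum_congr rfl fun y hy => by rw [horder y hy]
    _ ≤ _ := sum_le_sum_of_subset_of_nonneg hsub fun y _ _ =>
        one_div_nonneg.mpr (sub_nonneg.mpr (Nat.one_le_cast.mpr (orderOf_pos y)))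

end OrderOf

section Action

variable {G : Type*} [Group G] {Ω : Type*} [MulAction G Ω]

theorem IsConj.card_fixedBy_eq {x y : G} (h : IsConj x y) :
    Nat.card (fixedBy Ω x) = Nat.card (fixedBy Ω y) := by
  obtain ⟨c, rfl⟩ := isConj_iff.mp h
  rw [← smul_fixedBy, Nat.card_coe_set_eq, Nat.card_coe_set_eq, Set.ncard_smul_set]

theorem sum_sum_filter_smul_eq_self [Fintype Ω] {R : Type*} [NonAssocSemiring R]
    (s : Finset G) (f : G → R) :
    ∑ ω : Ω, ∑ x ∈ s with x • ω = ω, f x = ∑ x ∈ s, f x * Nat.card (fixedBy Ω x) := by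
  simp_rw [sum_filter]
  rw [sum_comm]
  refine sum_congr rfl fun x _ => ?_
  rw [← sum_filter, sum_const, nsmul_eq_mul', Nat.card_eq_fintype_card,
    Fintype.card_ofFinset]
  rfl

end Action

theorem sum_filter_isConj_eq_sum_card_nsmul {G : Type*} [Group G] [Fintype G]
    {M : Type*} [AddCommMonoid M] (P : Finset G) (hP : ∀ x ∈ P, ∀ y ∈ P, IsConj x y → x = y)
    (F : G → M) (hF : ∀ x y, IsConj x y → F x = F y) :
    ∑ g with ∃ x ∈ P, IsConj x g, F g = ∑ x ∈ P, Nat.card {h // IsConj x h} • F x := by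
  have hunion : ({g | ∃ x ∈ P, IsConj x g} : Finset G) = P.biUnion fun x => {h | IsConj x h} := by
    ext g; simp
  have hdisj : (P : Set G).PairwiseDisjoint fun x => ({h | IsConj x h} : Finset G) :=
    fun x hx y hy hxy => disjoint_left.mpr fun g hgx hgy => hxy <|
      hP x hx y hy ((mem_filter.mp hgx).2.trans (mem_filter.mp hgy).2.symm)
  rw [hunion, sum_biUnion hdisj]
  refine sum_congr rfl fun x _ => ?_
  rw [sum_congr rfl fun g hg => hF g x (mem_filter.mp hg).2.symm, sum_const,
    Nat.card_eq_fintype_card, Fintype.card_subtype]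

/-- If a finite group `G` acts on a finite set `Ω` with no regular orbit, and `P` is a
set of representatives of the conjugacy classes of elements of prime order of `G`, then
`|Ω| ≤ ∑_{x ∈ P} (1/(o(x)-1)) * |x^G| * |Fix(x)|` as rational numbers. -/
theorem stmt_4 (G : Type*) [Group G] [Fintype G] (Ω : Type*) [Fintype Ω]
    [MulAction G Ω]
    (hnoreg : ∀ ω : Ω, ∃ g : G, g ≠ 1 ∧ g • ω = ω)
    (P : Finset G)
    (hP1 : ∀ x ∈ P, (orderOf x).Prime)
    (hP2 : ∀ x ∈ P, ∀ y ∈ P, IsConj x y → x = y)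
    (hP3 : ∀ g : G, (orderOf g).Prime → ∃ x ∈ P, IsConj x g) :
    (Fintype.card Ω : ℚ) ≤
      ∑ x ∈ P, (1 / ((orderOf x : ℚ) - 1)) *
        (Nat.card {h : G // IsConj x h}) * (Nat.card {ω : Ω // x • ω = ω}) := by
  have hstab : ∀ ω : Ω, stabilizer G ω ≠ ⊥ := fun ω =>
    let ⟨g, hg1, hg⟩ := hnoreg ω
    (ne_bot_iff_exists_ne_one).mpr ⟨⟨g, hg⟩, fun h => hg1 (congrArg Subtype.val h)⟩
  have hprime : ∀ g : G, (orderOf g).Prime ↔ ∃ x ∈ P, IsConj x g := fun g =>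
    ⟨hP3 g, fun ⟨x, hx, hxg⟩ => hxg.orderOf_eq ▸ hP1 x hx⟩
  calc (Fintype.card Ω : ℚ) = ∑ _ω : Ω, 1 := by simp
    _ ≤ ∑ ω : Ω, ∑ x with x ∈ stabilizer G ω ∧ (orderOf x).Prime, 1 / ((orderOf x : ℚ) - 1) :=
        sum_le_sum fun ω _ => one_le_sum_one_div_orderOf_sub_one (hstab ω)
    _ = ∑ ω : Ω, ∑ x ∈ {x | ∃ y ∈ P, IsConj y x} with x • ω = ω, 1 / ((orderOf x : ℚ) - 1) := by
        simp only [filter_filter, mem_stabilizer_iff, hprime, and_comm]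
    _ = ∑ x with ∃ y ∈ P, IsConj y x, 1 / ((orderOf x : ℚ) - 1) * Nat.card (fixedBy Ω x) :=
        sum_sum_filter_smul_eq_self _ _
    _ = _ := by
        rw [sum_filter_isConj_eq_sum_card_nsmul P hP2 _ fun x y hxy => by
          rw [hxy.orderOf_eq, hxy.card_fixedBy_eq]]
        refine sum_congr rfl fun x _ => ?_
        rw [nsmul_eq_mul, mul_left_comm, ← mul_assoc]
        rfl
end

section
/- Let k be a field, V a finite-dimensional k-vector space, and G a subgroup of GL(V) such that the only subspaces of V invariant under every element of G are 0 and V. Let x ∈ G be a non-scalar element (x is not of the form c·id for any c ∈ k), and suppose there exist g₁, …, g_α ∈ G such that G is generated by the conjugates g₁xg₁⁻¹, …, g_αxg_α⁻¹. Then for every ν ∈ k, the ν-eigenspace E_ν(x) = ker(x − ν·id) satisfies α · dim E_ν(x) ≤ (α − 1) · dim V; in particular dim E_ν(x) ≤ ⌊(1 − 1/α)·dim V⌋. -/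
open Module

lemma inf_finrank_aux (k : Type*) [Field k] (V : Type*) [AddCommGroup V] [Module k V]
    [FiniteDimensional k V] {ι : Type*} [DecidableEq ι] (W : ι → Submodule k V)
    (s : Finset ι) :
    (∑ i ∈ s, finrank k (W i)) + finrank k V ≤
      finrank k ↥(s.inf W) + s.card * finrank k V := by
  induction s using Finset.induction with
  | empty => simp [Finset.inf_empty, finrank_top]; rw [Finset.inf_empty, finrank_top]
  | @insert a s ha ih =>
    rw [Finset.sum_insert ha, Finset.inf_insert, Finset.card_insert_of_notMem ha]
    have h1 := Submodule.finrank_sup_add_finrank_inf_eq (W a) (s.inf W)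
    have h2 : finrank k ↥(W a ⊔ s.inf W) ≤ finrank k V := Submodule.finrank_le _
    have h3 : (s.card + 1) * finrank k V = s.card * finrank k V + finrank k V := by ring
    omega

/-- Let `G ≤ GL(V)` act irreducibly on a finite-dimensional vector space `V` over a
field `k`, let `x ∈ G` be non-scalar, and suppose `G` is generated by `α` conjugates
`g₁ x g₁⁻¹, …, g_α x g_α⁻¹` of `x`. Then every eigenspace `E_ν(x)` of `x` satisfies
`α * dim E_ν(x) ≤ (α - 1) * dim V`; in particular
`dim E_ν(x) ≤ ⌊(1 - 1/α) * dim V⌋ = (α - 1) * dim V / α`. -/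
theorem stmt_5 (k : Type*) [Field k]
    (V : Type*) [AddCommGroup V] [Module k V] [FiniteDimensional k V]
    (G : Subgroup (V ≃ₗ[k] V))
    (hirr : ∀ W : Submodule k V, (∀ g ∈ G, ∀ v ∈ W, g v ∈ W) → W = ⊥ ∨ W = ⊤)
    (x : V ≃ₗ[k] V) (hxG : x ∈ G)
    (hxns : ¬ ∃ c : k, ∀ v : V, x v = c • v)
    (α : ℕ) (g : Fin α → (V ≃ₗ[k] V)) (hg : ∀ i, g i ∈ G)
    (hgen : Subgroup.closure (Set.range fun i => g i * x * (g i)⁻¹) = G) :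
    ∀ ν : k,
      α * Module.finrank k (LinearMap.ker ((x : V →ₗ[k] V) - ν • LinearMap.id)) ≤
        (α - 1) * Module.finrank k V ∧
      Module.finrank k (LinearMap.ker ((x : V →ₗ[k] V) - ν • LinearMap.id)) ≤
        (α - 1) * Module.finrank k V / α := by
  intro ν
  -- α = 0 is impossible
  rcases Nat.eq_zero_or_pos α with hα0 | hαpos
  · exfalso
    subst hα0
    have : Set.range (fun i : Fin 0 => g i * x * (g i)⁻¹) = ∅ := Set.range_eq_empty _
    rw [this, Subgroup.closure_empty] at hgen
    rw [← hgen, Subgroup.mem_bot] at hxG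
    exact hxns ⟨1, fun v => by rw [hxG]; simp⟩
  set E : Submodule k V := LinearMap.ker ((x : V →ₗ[k] V) - ν • LinearMap.id) with hE
  have hmemE : ∀ v, v ∈ E ↔ x v = ν • v := by
    intro v
    rw [hE, LinearMap.mem_ker, LinearMap.sub_apply, LinearMap.smul_apply, LinearMap.id_apply,
      sub_eq_zero]
    rfl
  set d := finrank k E with hd
  set n := finrank k V with hn
  -- trivial if d = 0
  rcases Nat.eq_zero_or_pos d with hd0 | hdpos
  · constructor
    · rw [hd0]; simp
    · rw [hd0]; simp
  -- ν ≠ 0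
  have hν : ν ≠ 0 := by
    intro h
    rw [h] at hmemE
    have : E = ⊥ := by
      rw [Submodule.eq_bot_iff]
      intro v hv
      have := (hmemE v).mp hv
      simpa using x.injective (by simpa using this)
    rw [this] at hd
    simp [finrank_bot] at hd
    omega
  classical
  set W : Fin α → Submodule k V := fun i => E.map ((g i : V →ₗ[k] V)) with hW
  set U : Submodule k V := Finset.univ.inf W with hU
  have hmemU : ∀ v, v ∈ U ↔ ∀ i, v ∈ W i := by
    intro v; rw [hU, Submodule.mem_finsetInf]; simp
  -- generator action on U
  have hgenU : ∀ i, ∀ v ∈ U, (g i * x * (g i)⁻¹) v = ν • v := by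
    intro i v hv
    obtain ⟨e, he, rfl⟩ := (hmemU v).mp hv i
    have hxe := (hmemE e).mp he
    show (g i) (x ((g i)⁻¹ ((g i) e))) = ν • (g i) e
    rw [show (g i)⁻¹ ((g i) e) = e from x.symm_apply_apply e ▸ (g i).symm_apply_apply e,
      hxe, map_smul]
  have hgenU' : ∀ i, ∀ v ∈ U, (g i * x * (g i)⁻¹)⁻¹ v = ν⁻¹ • v := by
    intro i v hv
    have h := hgenU i v hv
    have : (g i * x * (g i)⁻¹)⁻¹ ((g i * x * (g i)⁻¹) v) = v :=
      (g i * x * (g i)⁻¹).symm_apply_apply v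
    rw [h, map_smul] at this
    calc (g i * x * (g i)⁻¹)⁻¹ v = ν⁻¹ • (ν • (g i * x * (g i)⁻¹)⁻¹ v) := by
          rw [smul_smul, inv_mul_cancel₀ hν, one_smul]
      _ = ν⁻¹ • v := by rw [this]
  -- U is G-invariant
  have hUinv : ∀ gg ∈ G, ∀ v ∈ U, gg v ∈ U := by
    intro gg hgg
    rw [← hgen] at hgg
    have key : ∀ v : V, v ∈ U ↔ gg v ∈ U := by
      induction hgg using Subgroup.closure_induction with
      | mem s hs =>
        obtain ⟨i, rfl⟩ := hs
        intro v
        constructor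
        · intro hv
          rw [hgenU i v hv]
          exact U.smul_mem ν hv
        · intro hv
          have : (g i * x * (g i)⁻¹)⁻¹ ((g i * x * (g i)⁻¹) v) = v :=
            (g i * x * (g i)⁻¹).symm_apply_apply v
          rw [← this, hgenU' i _ hv]
          exact U.smul_mem _ hv
      | one => intro v; simp
      | mul a b _ _ iha ihb =>
        intro v
        rw [ihb v, show (a * b) v = a (b v) from rfl, ← iha (b v)]
      | inv a _ iha =>
        intro v
        have := iha (a⁻¹ v)
        rw [show a (a⁻¹ v) = v from a.apply_symm_apply v] at this
        exact this.symm
    intro v hv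
    exact (key v).mp hv
  rcases hirr U hUinv with hUbot | hUtop
  · -- main dimension count
    have hWd : ∀ i, finrank k (W i) = d := fun i => LinearEquiv.finrank_map_eq (g i) E
    have hsum : (∑ i : Fin α, finrank k (W i)) = α * d := by
      simp [hWd, Finset.sum_const, Finset.card_univ, mul_comm]
    have h := inf_finrank_aux k V W Finset.univ
    rw [hsum, ← hU, hUbot] at h
    simp only [finrank_bot, zero_add, Finset.card_univ, Fintype.card_fin, ← hn] at h
    have h1 : α * d ≤ (α - 1) * n := by
      rw [Nat.sub_mul, one_mul]
      exact Nat.le_sub_of_add_le h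
    refine ⟨h1, ?_⟩
    rw [Nat.le_div_iff_mul_le hαpos, mul_comm]
    exact h1
  · -- U = ⊤ impossible
    exfalso
    have i0 : Fin α := ⟨0, hαpos⟩
    have hWtop : W i0 = ⊤ := by
      have : U ≤ W i0 := Finset.inf_le (Finset.mem_univ i0)
      rw [hUtop] at this
      exact top_unique this
    have hEtop : E = ⊤ := by
      have h2 : Submodule.map ((g i0 : V →ₗ[k] V)) E = Submodule.map ((g i0 : V →ₗ[k] V)) ⊤ := by
        rw [Submodule.map_top]
        exact hWtop.trans (LinearMap.range_eq_top.mpr (g i0).surjective).symm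
      exact Submodule.map_injective_of_injective (g i0).injective h2
    exact hxns ⟨ν, fun v => (hmemE v).mp (hEtop ▸ Submodule.mem_top)⟩
end

section
/- Let k be an algebraically closed field, let V₁ and V₂ be k-vector spaces of finite dimensions d₁ and d₂ respectively, and let g₁ ∈ GL(V₁), g₂ ∈ GL(V₂) satisfy g₁^p = 1 and g₂^p = 1 for some prime p. Let g = g₁ ⊗ g₂ denote the induced automorphism of V₁ ⊗_k V₂. Then for every ν ∈ k, dim ker(g − ν·id) ≤ min{ d₂ · max_{λ∈k} dim ker(g₁ − λ·id), d₁ · max_{μ∈k} dim ker(g₂ − μ·id) }. -/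
/-!
For `ν ^ p ≠ 1` the `ν`-eigenspace of `g₁ ⊗ g₂` is zero; otherwise it is the fixed space of
`(ν⁻¹ • g₁) ⊗ g₂`, where `ν⁻¹ • g₁` again has order dividing `p` and the same eigenspace
dimensions up to relabelling. By the symmetry of `⊗` it then suffices to bound the fixed space by
`d₂ · max_λ dim ker (g₁ - λ)`. Identifying `V₁ ⊗ V₂` with `Hom (V₁*, V₂)`, a fixed vector becomes
a map `T` with `g₂ ∘ T ∘ g₁* = T`, so `T` is determined by its values on any set of generators of
`V₁*` as a `k[g₁*]`-module. If `f ^ p = 1`, the space is generated as a `k[f]`-module by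
`max_λ dim ker (f - λ)` elements: in characteristic `p` the map `f - 1` is nilpotent, and lifts of
a basis of `V / (f - 1) V` generate; otherwise `f` is diagonalisable, and the sums over all
eigenvalues of the `i`-th basis vectors of the eigenspaces generate, each summand being recovered
by a Lagrange interpolation polynomial in `f`.
-/

open Module Module.End Polynomial TensorProduct

lemma LinearEquiv.toLinearMap_pow {R M : Type*} [Semiring R] [AddCommMonoid M] [Module R M]
    (e : M ≃ₗ[R] M) (n : ℕ) : ((e ^ n : M ≃ₗ[R] M) : End R M) = (e : End R M) ^ n :=
  map_pow LinearEquiv.automorphismGroup.toLinearMapMonoidHom e n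

lemma Submodule.exists_fin_span_range_eq {k V : Type*} [Field k] [AddCommGroup V] [Module k V]
    (W : Submodule k V) [FiniteDimensional k W] {m : ℕ} (hm : finrank k W ≤ m) :
    ∃ e : Fin m → V, span k (Set.range e) = W := by
  let b := finBasis k W
  refine ⟨fun i => if h : (i : ℕ) < finrank k W then b ⟨i, h⟩ else 0, le_antisymm ?_ ?_⟩
  · rw [span_le]
    rintro _ ⟨i, rfl⟩
    by_cases h : (i : ℕ) < finrank k W <;> simp [h]
  · conv_lhs => rw [← W.range_subtype, LinearMap.range_eq_map, ← b.span_eq, map_span]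
    rw [span_le]
    rintro _ ⟨_, ⟨j, rfl⟩, rfl⟩
    exact subset_span ⟨Fin.castLE hm j, by simp⟩

namespace Module.End

section OrbitSpan

variable {R M : Type*} [CommRing R] [AddCommGroup M] [Module R M]

noncomputable def orbitSpan (f : End R M) {ι : Type*} (v : ι → M) : Submodule R M :=
  Submodule.span R (Set.range fun z : ℕ × ι => (f ^ z.1) (v z.2))

variable (f : End R M) {ι : Type*} (v : ι → M)

lemma aeval_apply_mem_of_mem_invtSubmodule {p : Submodule R M} (hp : p ∈ f.invtSubmodule)
    (P : R[X]) {x : M} (hx : x ∈ p) : aeval f P x ∈ p := by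
  induction P using Polynomial.induction_on' with
  | add P Q hP hQ => simpa using add_mem hP hQ
  | monomial n a =>
    have hpow : (f ^ n) x ∈ p := by
      induction n with
      | zero => simpa using hx
      | succ n ih => simpa [pow_succ'] using (mem_invtSubmodule f).mp hp ih
    simpa [aeval_monomial] using p.smul_mem a hpow

lemma orbitSpan_mem_invtSubmodule : f.orbitSpan v ∈ f.invtSubmodule := by
  rw [mem_invtSubmodule_iff_map_le, orbitSpan, Submodule.map_span, Submodule.span_le]
  rintro _ ⟨_, ⟨⟨n, i⟩, rfl⟩, rfl⟩
  exact Submodule.subset_span ⟨(n + 1, i), by simp [pow_succ']⟩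

lemma orbitSpan_le_of_mem_invtSubmodule {p : Submodule R M} (hp : p ∈ f.invtSubmodule)
    (hv : ∀ i, v i ∈ p) : f.orbitSpan v ≤ p := by
  rw [orbitSpan, Submodule.span_le]
  rintro _ ⟨⟨n, i⟩, rfl⟩
  simpa using f.aeval_apply_mem_of_mem_invtSubmodule hp (X ^ n) (hv i)

lemma aeval_apply_mem_orbitSpan (P : R[X]) (i : ι) : aeval f P (v i) ∈ f.orbitSpan v :=
  f.aeval_apply_mem_of_mem_invtSubmodule (f.orbitSpan_mem_invtSubmodule v) P
    (Submodule.subset_span ⟨(0, i), by simp⟩)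

lemma orbitSpan_sub_smul_one_le (μ : R) : orbitSpan (f - μ • 1) v ≤ f.orbitSpan v := by
  rw [orbitSpan, Submodule.span_le]
  rintro _ ⟨⟨n, i⟩, rfl⟩
  have haeval : aeval f ((X - C μ) ^ n) = (f - μ • 1) ^ n := by
    simp [Algebra.algebraMap_eq_smul_one]
  change ((f - μ • 1) ^ n) (v i) ∈ f.orbitSpan v
  rw [← haeval]
  exact f.aeval_apply_mem_orbitSpan v _ i

lemma orbitSpan_sup_range_pow_eq_top (hv : Submodule.span R (Set.range v) ⊔ LinearMap.range f = ⊤)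
    (t : ℕ) : f.orbitSpan v ⊔ LinearMap.range (f ^ t) = ⊤ := by
  induction t with
  | zero => rw [pow_zero, one_eq_id, LinearMap.range_id, sup_top_eq]
  | succ t ih =>
    have hspan : (Submodule.span R (Set.range v)).map (f ^ t) ≤ f.orbitSpan v := by
      rw [Submodule.map_span, Submodule.span_le]
      rintro _ ⟨_, ⟨i, rfl⟩, rfl⟩
      exact Submodule.subset_span ⟨(t, i), rfl⟩
    have hrange : (LinearMap.range f).map (f ^ t) = LinearMap.range (f ^ (t + 1)) := by
      rw [pow_succ, mul_eq_comp, LinearMap.range_comp]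
    refine eq_top_iff.mpr ?_
    calc ⊤ = f.orbitSpan v ⊔ (⊤ : Submodule R M).map (f ^ t) := by rw [Submodule.map_top, ih]
      _ = f.orbitSpan v ⊔ ((Submodule.span R (Set.range v)).map (f ^ t) ⊔
            (LinearMap.range f).map (f ^ t)) := by rw [← hv, Submodule.map_sup]
      _ ≤ f.orbitSpan v ⊔ LinearMap.range (f ^ (t + 1)) := by
        rw [hrange, ← sup_assoc, sup_eq_left.mpr hspan]

end OrbitSpan

section Eigenspaces

variable {k V : Type*} [Field k] [AddCommGroup V] [Module k V]

noncomputable def maxEigenspaceFinrank (f : End k V) : ℕ :=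
  ⨆ μ : k, finrank k (f.eigenspace μ)

lemma maxEigenspaceFinrank_eq_iSup_finrank_ker (f : End k V) :
    f.maxEigenspaceFinrank = ⨆ μ : k, finrank k (LinearMap.ker (f - μ • LinearMap.id)) :=
  iSup_congr fun μ => by rw [eigenspace_def, one_eq_id]

lemma finrank_eigenspace_le_maxEigenspaceFinrank [FiniteDimensional k V] (f : End k V) (μ : k) :
    finrank k (f.eigenspace μ) ≤ f.maxEigenspaceFinrank :=
  le_ciSup (f := fun μ => finrank k (f.eigenspace μ))
    ⟨finrank k V, by rintro _ ⟨μ, rfl⟩; exact Submodule.finrank_le _⟩ μ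

lemma eigenspace_smul (f : End k V) {c : k} (hc : c ≠ 0) (μ : k) :
    (c • f).eigenspace (c * μ) = f.eigenspace μ := by
  refine le_antisymm ?_ (genEigenspace_le_smul f μ c 1)
  simpa [smul_smul, hc] using genEigenspace_le_smul (c • f) (c * μ) c⁻¹ 1

lemma maxEigenspaceFinrank_smul (f : End k V) {c : k} (hc : c ≠ 0) :
    (c • f).maxEigenspaceFinrank = f.maxEigenspaceFinrank := by
  have hsurj : Function.Surjective (c * ·) := fun μ => ⟨c⁻¹ * μ, by simp [hc]⟩
  rw [maxEigenspaceFinrank, ← hsurj.iSup_comp]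
  exact iSup_congr fun μ => by rw [eigenspace_smul f hc]

lemma finrank_eigenspace_dualMap [FiniteDimensional k V] (f : End k V) (μ : k) :
    finrank k (eigenspace f.dualMap μ) = finrank k (f.eigenspace μ) := by
  have hdual : f.dualMap - μ • 1 = (f - μ • 1).dualMap := by ext; simp
  have h₁ := (f - μ • 1).dualMap.finrank_range_add_finrank_ker
  have h₂ := (f - μ • 1).finrank_range_add_finrank_ker
  rw [LinearMap.finrank_range_dualMap_eq_finrank_range, Subspace.dual_finrank_eq] at h₁
  rw [eigenspace_def, eigenspace_def, hdual]
  omega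

lemma maxEigenspaceFinrank_dualMap [FiniteDimensional k V] (f : End k V) :
    maxEigenspaceFinrank f.dualMap = f.maxEigenspaceFinrank := by
  simp only [maxEigenspaceFinrank, finrank_eigenspace_dualMap]

lemma dualMap_pow (f : End k V) (n : ℕ) : (f ^ n).dualMap = f.dualMap ^ n := by
  induction n with
  | zero => exact LinearMap.dualMap_id
  | succ n ih =>
    rw [pow_succ', mul_eq_comp, ← LinearMap.dualMap_comp_dualMap, ih, pow_succ, mul_eq_comp]

end Eigenspaces

section Generators

variable {k V : Type*} [Field k] [AddCommGroup V] [Module k V] [FiniteDimensional k V]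

lemma exists_orbitSpan_eq_top_of_isNilpotent {u : End k V} (hu : IsNilpotent u) :
    ∃ v : Fin (finrank k (LinearMap.ker u)) → V, u.orbitSpan v = ⊤ := by
  have hdim : finrank k (V ⧸ LinearMap.range u) = finrank k (LinearMap.ker u) := by
    have := (LinearMap.range u).finrank_quotient_add_finrank
    have := u.finrank_range_add_finrank_ker
    omega
  set W := LinearMap.range u
  let b := finBasisOfFinrankEq k (V ⧸ W) hdim
  let v := Function.surjInv W.mkQ_surjective ∘ b
  have hv : Submodule.span k (Set.range v) ⊔ W = ⊤ := by
    have hmk : W.mkQ ∘ v = b := funext fun i => Function.surjInv_eq W.mkQ_surjective (b i)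
    rw [← W.ker_mkQ, ← Submodule.comap_map_eq, Submodule.map_span, ← Set.range_comp, hmk,
      b.span_eq, Submodule.comap_top]
  obtain ⟨n, hn⟩ := hu
  exact ⟨v, by simpa [hn] using u.orbitSpan_sup_range_pow_eq_top v hv n⟩

lemma exists_orbitSpan_eq_top_of_iSup_eigenspace_eq_top {f : End k V}
    (hf : ⨆ μ, f.eigenspace μ = ⊤) : ∃ v : Fin f.maxEigenspaceFinrank → V, f.orbitSpan v = ⊤ := by
  classical
  choose e he using fun μ => (f.eigenspace μ).exists_fin_span_range_eq
    (f.finrank_eigenspace_le_maxEigenspaceFinrank μ)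
  have he_eig : ∀ μ i, f (e μ i) = μ • e μ i := fun μ i =>
    mem_eigenspace_iff.mp (he μ ▸ Submodule.subset_span ⟨i, rfl⟩)
  set S := f.finite_hasEigenvalue.toFinset
  refine ⟨fun i => ∑ μ ∈ S, e μ i, eq_top_iff.mpr (hf ▸ iSup_le fun μ => ?_)⟩
  by_cases hμ : μ ∈ S
  · rw [← he μ, Submodule.span_le]
    rintro _ ⟨i, rfl⟩
    have hcomponent : aeval f (Lagrange.basis S id μ) (∑ ν ∈ S, e ν i) = e μ i := by
      simp only [map_sum, aeval_apply_of_mem_apply_eq_smul (he_eig _ i)]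
      have hself : (Lagrange.basis S id μ).eval μ = 1 :=
        Lagrange.eval_basis_self (Set.injOn_id _) hμ
      rw [Finset.sum_eq_single_of_mem μ hμ, hself, one_smul]
      intro ν hν hνμ
      have hother : (Lagrange.basis S id μ).eval ν = 0 :=
        Lagrange.eval_basis_of_ne (v := id) hνμ.symm hν
      rw [hother, zero_smul]
    rw [SetLike.mem_coe, ← hcomponent]
    exact f.aeval_apply_mem_orbitSpan _ _ i
  · have hbot : f.eigenspace μ = ⊥ := by simpa [S, hasEigenvalue_iff] using hμ
    exact hbot ▸ bot_le

lemma exists_orbitSpan_eq_top_of_pow_eq_one [IsAlgClosed k] {p : ℕ} (hp : p.Prime) {f : End k V}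
    (hf : f ^ p = 1) :
    ∃ (m : ℕ) (v : Fin m → V), m ≤ f.maxEigenspaceFinrank ∧ f.orbitSpan v = ⊤ := by
  by_cases hpk : (p : k) = 0
  · have : Fact p.Prime := ⟨hp⟩
    have : CharP k p := (CharP.charP_iff_prime_eq_zero hp).mpr hpk
    have hnil : IsNilpotent (f - 1) := by
      refine ⟨p, ?_⟩
      have h := congrArg (aeval f) (sub_pow_char (X : k[X]) 1)
      simpa [hf] using h
    obtain ⟨v, hv⟩ := exists_orbitSpan_eq_top_of_isNilpotent hnil
    refine ⟨_, v, ?_, eq_top_iff.mpr (hv ▸ ?_)⟩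
    · have := f.finrank_eigenspace_le_maxEigenspaceFinrank 1
      rwa [eigenspace_def, one_smul] at this
    · simpa using f.orbitSpan_sub_smul_one_le v 1
  · have hsemisimple : f.IsSemisimple := by
      refine isSemisimple_of_squarefree_aeval_eq_zero
        (X_pow_sub_one_separable_iff.mpr hpk).squarefree (p := X ^ p - 1) ?_
      simp [hf]
    obtain ⟨v, hv⟩ := exists_orbitSpan_eq_top_of_iSup_eigenspace_eq_top
      hsemisimple.iSup_eigenspace_eq_top
    exact ⟨_, v, le_rfl, hv⟩

end Generators

section TensorProduct

variable {k V₁ V₂ : Type*} [Field k] [AddCommGroup V₁] [Module k V₁] [AddCommGroup V₂]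
  [Module k V₂]

lemma finrank_eigenspace_map_comm (f₁ : End k V₁) (f₂ : End k V₂) (ν : k) :
    finrank k (eigenspace (map f₂ f₁) ν) = finrank k (eigenspace (map f₁ f₂) ν) := by
  let e := TensorProduct.comm k V₁ V₂
  have hmap : (eigenspace (map f₁ f₂) ν).map e.toLinearMap = eigenspace (map f₂ f₁) ν := by
    ext y
    rw [Submodule.mem_map_equiv, TensorProduct.comm_symm, mem_eigenspace_iff, mem_eigenspace_iff,
      map_comm, ← LinearEquiv.map_smul, LinearEquiv.injective _ |>.eq_iff]
  rw [← hmap, LinearEquiv.finrank_map_eq]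

variable [FiniteDimensional k V₁]

noncomputable def tensorEquivDualHom : V₁ ⊗[k] V₂ ≃ₗ[k] (Dual k V₁ →ₗ[k] V₂) :=
  (TensorProduct.congr (evalEquiv k V₁) (LinearEquiv.refl k V₂)).trans
    (dualTensorHomEquiv k (Dual k V₁) V₂)

@[simp]
lemma tensorEquivDualHom_tmul (a : V₁) (b : V₂) (φ : Dual k V₁) :
    tensorEquivDualHom (a ⊗ₜ[k] b) φ = φ a • b := by
  simp [tensorEquivDualHom, dualTensorHomEquiv]

lemma tensorEquivDualHom_map_apply (f₁ : End k V₁) (f₂ : End k V₂) (x : V₁ ⊗[k] V₂)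
    (φ : Dual k V₁) :
    tensorEquivDualHom (map f₁ f₂ x) φ = f₂ (tensorEquivDualHom x (f₁.dualMap φ)) := by
  induction x using TensorProduct.induction_on with
  | zero => simp
  | tmul a b => simp
  | add x y hx hy => simp [hx, hy]

lemma finrank_eigenspace_one_map_le [FiniteDimensional k V₂] (f₁ : End k V₁) {f₂ : End k V₂}
    (hf₂ : Function.Injective f₂) {m : ℕ} {ξ : Fin m → Dual k V₁}
    (hξ : orbitSpan f₁.dualMap ξ = ⊤) :
    finrank k (eigenspace (map f₁ f₂) 1) ≤ m * finrank k V₂ := by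
  let L : eigenspace (map f₁ f₂) 1 →ₗ[k] Fin m → V₂ :=
    LinearMap.pi fun i => LinearMap.applyₗ (ξ i) ∘ₗ tensorEquivDualHom.toLinearMap ∘ₗ
      (eigenspace (map f₁ f₂) 1).subtype
  have hL : Function.Injective L := by
    rw [← LinearMap.ker_eq_bot, Submodule.eq_bot_iff]
    rintro ⟨x, hx⟩ hLx
    have hfix : map f₁ f₂ x = x := by simpa using mem_eigenspace_iff.mp hx
    have hinvt : LinearMap.ker (tensorEquivDualHom x) ∈ invtSubmodule f₁.dualMap := by
      intro φ hφ
      apply hf₂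
      simpa [← tensorEquivDualHom_map_apply, hfix] using hφ
    have hker := orbitSpan_le_of_mem_invtSubmodule _ ξ hinvt fun i => congrFun hLx i
    rw [hξ, top_le_iff, LinearMap.ker_eq_top, LinearEquiv.map_eq_zero_iff] at hker
    simpa using hker
  calc finrank k (eigenspace (map f₁ f₂) 1) ≤ finrank k (Fin m → V₂) :=
        LinearMap.finrank_le_finrank_of_injective hL
    _ = m * finrank k V₂ := by simp [Module.finrank_pi_fintype]

lemma finrank_eigenspace_map_le_of_pow_eq_one [IsAlgClosed k] [FiniteDimensional k V₂] {p : ℕ}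
    (hp : p.Prime) {f₁ : End k V₁} {f₂ : End k V₂} (hf₁ : f₁ ^ p = 1) (hf₂ : f₂ ^ p = 1) (ν : k) :
    finrank k (eigenspace (map f₁ f₂) ν) ≤ finrank k V₂ * f₁.maxEigenspaceFinrank := by
  by_cases hν : ν ^ p = 1
  · have hν0 : ν ≠ 0 := by rintro rfl; simp [hp.ne_zero] at hν
    have hg : (ν⁻¹ • f₁).dualMap ^ p = 1 := by
      rw [← dualMap_pow, _root_.smul_pow, hf₁, inv_pow, hν, inv_one, one_smul]
      exact LinearMap.dualMap_id
    obtain ⟨m, ξ, hm, hξ⟩ := exists_orbitSpan_eq_top_of_pow_eq_one hp hg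
    have hf₂inj : Function.Injective f₂ :=
      Function.LeftInverse.injective (g := f₂ ^ (p - 1)) fun x => by
        rw [← mul_apply, ← pow_succ, Nat.sub_add_cancel hp.one_lt.le, hf₂, one_apply]
    rw [maxEigenspaceFinrank_dualMap, maxEigenspaceFinrank_smul _ (inv_ne_zero hν0)] at hm
    calc finrank k (eigenspace (map f₁ f₂) ν)
        = finrank k (eigenspace (map (ν⁻¹ • f₁) f₂) 1) := by
          rw [map_smul_left, ← inv_mul_cancel₀ hν0, eigenspace_smul _ (inv_ne_zero hν0)]
      _ ≤ m * finrank k V₂ := finrank_eigenspace_one_map_le _ hf₂inj hξ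
      _ ≤ finrank k V₂ * f₁.maxEigenspaceFinrank := by
        rw [mul_comm]
        exact Nat.mul_le_mul_left _ hm
  · have hbot : eigenspace (map f₁ f₂) ν = ⊥ := by
      by_contra h
      obtain ⟨x, hx⟩ := (hasEigenvalue_iff.mpr h).pow p |>.exists_hasEigenvector
      rw [TensorProduct.map_pow, hf₁, hf₂, TensorProduct.map_one] at hx
      exact hν (smul_left_injective k hx.2 (by simpa using hx.apply_eq_smul.symm))
    rw [hbot, finrank_bot]
    exact Nat.zero_le _

end TensorProduct

end Module.End

/-- Let `g₁`, `g₂` be automorphisms of order dividing a prime `p` of finite-dimensional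
vector spaces `V₁`, `V₂` over an algebraically closed field `k`, and let
`g = g₁ ⊗ g₂` act on `V₁ ⊗ V₂`. Then every eigenspace of `g` has dimension at most
`min (d₂ * maxₗ dim E_λ(g₁)) (d₁ * maxₘ dim E_μ(g₂))`. -/
theorem stmt_8 (k : Type*) [Field k] [IsAlgClosed k]
    (V₁ V₂ : Type*) [AddCommGroup V₁] [Module k V₁] [FiniteDimensional k V₁]
    [AddCommGroup V₂] [Module k V₂] [FiniteDimensional k V₂]
    (p : ℕ) (hp : p.Prime)
    (g₁ : V₁ ≃ₗ[k] V₁) (g₂ : V₂ ≃ₗ[k] V₂)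
    (hg₁ : g₁ ^ p = 1) (hg₂ : g₂ ^ p = 1) :
    ∀ ν : k,
      Module.finrank k (LinearMap.ker
        (TensorProduct.map (g₁ : V₁ →ₗ[k] V₁) (g₂ : V₂ →ₗ[k] V₂) - ν • LinearMap.id)) ≤
      min
        (Module.finrank k V₂ *
          ⨆ lam : k, Module.finrank k (LinearMap.ker ((g₁ : V₁ →ₗ[k] V₁) - lam • LinearMap.id)))
        (Module.finrank k V₁ *
          ⨆ mu : k, Module.finrank k (LinearMap.ker ((g₂ : V₂ →ₗ[k] V₂) - mu • LinearMap.id))) := by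
  intro ν
  have h₁ : (g₁ : End k V₁) ^ p = 1 := by rw [← LinearEquiv.toLinearMap_pow, hg₁]; rfl
  have h₂ : (g₂ : End k V₂) ^ p = 1 := by rw [← LinearEquiv.toLinearMap_pow, hg₂]; rfl
  rw [← maxEigenspaceFinrank_eq_iSup_finrank_ker, ← maxEigenspaceFinrank_eq_iSup_finrank_ker,
    ← one_eq_id, ← eigenspace_def]
  refine le_min (finrank_eigenspace_map_le_of_pow_eq_one hp h₁ h₂ ν) ?_
  rw [← finrank_eigenspace_map_comm]
  exact finrank_eigenspace_map_le_of_pow_eq_one hp h₂ h₁ ν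
end

section
/- Let F ⊆ K be a field extension of finite degree i, let V be a finite-dimensional F-vector space, and let G be a subgroup of GL_F(V), acting on the base change K ⊗_F V via g ↦ 1_K ⊗ g. If there is a finite subset B ⊆ K ⊗_F V of cardinality c whose pointwise stabilizer in G is trivial (i.e. the only g ∈ G fixing every element of B under the base-changed action is the identity), then there is a finite subset B' ⊆ V of cardinality at most c·i whose pointwise stabilizer in G is trivial. In particular, if G has a base of size c on K ⊗_F V, then G has a base of size at most c·i on V. -/
/-!
Choose an `F`-basis `β` of `K`. Every `t ∈ K ⊗[F] V` is uniquely `∑ⱼ βⱼ ⊗ vⱼ`, and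
`1_K ⊗ g` sends it to `∑ⱼ βⱼ ⊗ g vⱼ`; so `g` fixes `t` as soon as it fixes its `i`
coefficients `vⱼ ∈ V`. The coefficients of the `c` elements of a base on `K ⊗[F] V`
therefore form a base on `V` of size at most `c * i`.
-/

namespace TensorProduct

section CoeffsLeft

variable {R M N P ι : Type*} [CommRing R] [AddCommGroup M] [Module R M]
  [AddCommGroup N] [Module R N] [AddCommGroup P] [Module R P]
  [DecidableEq ι] (ℬ : Module.Basis ι R M)

theorem equivFinsuppOfBasisLeft_lTensor_apply (f : N →ₗ[R] P) (x : M ⊗[R] N) (j : ι) :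
    equivFinsuppOfBasisLeft ℬ (f.lTensor M x) j = f (equivFinsuppOfBasisLeft ℬ x j) := by
  induction x with
  | zero => simp
  | tmul m n => simp
  | add x y hx hy => simp [hx, hy]

theorem lTensor_apply_eq_self_of_forall_coeff (f : N →ₗ[R] N) (x : M ⊗[R] N)
    (h : ∀ j, f (equivFinsuppOfBasisLeft ℬ x j) = equivFinsuppOfBasisLeft ℬ x j) :
    f.lTensor M x = x :=
  (equivFinsuppOfBasisLeft ℬ).injective <| Finsupp.ext fun j => by
    rw [equivFinsuppOfBasisLeft_lTensor_apply, h]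

variable [Fintype ι] [DecidableEq N]

noncomputable def coeffsLeft (B : Finset (M ⊗[R] N)) : Finset N :=
  B.biUnion fun x => Finset.univ.image (equivFinsuppOfBasisLeft ℬ x)

theorem card_coeffsLeft_le (B : Finset (M ⊗[R] N)) :
    (coeffsLeft ℬ B).card ≤ B.card * Fintype.card ι :=
  Finset.card_biUnion_le_card_mul _ _ _ fun _ _ => Finset.card_image_le

theorem lTensor_apply_eq_self_of_forall_mem_coeffsLeft (f : N →ₗ[R] N)
    (B : Finset (M ⊗[R] N)) (h : ∀ n ∈ coeffsLeft ℬ B, f n = n) :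
    ∀ x ∈ B, f.lTensor M x = x := fun x hx =>
  lTensor_apply_eq_self_of_forall_coeff ℬ f x fun j =>
    h _ (Finset.mem_biUnion.mpr ⟨x, hx, Finset.mem_image_of_mem _ (Finset.mem_univ j)⟩)

end CoeffsLeft

end TensorProduct

open TensorProduct

theorem stmt_10_general (F K : Type*) [Field F] [Field K] [Algebra F K]
    [FiniteDimensional F K] (i : ℕ) (hi : Module.finrank F K = i)
    (V : Type*) [AddCommGroup V] [Module F V]
    (G : Subgroup (V ≃ₗ[F] V))
    (c : ℕ) (B : Finset (TensorProduct F K V)) (hBc : B.card = c)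
    (hB : ∀ g ∈ G, (∀ b ∈ B, LinearMap.baseChange K (g : V →ₗ[F] V) b = b) → g = 1) :
    ∃ B' : Finset V, B'.card ≤ c * i ∧ ∀ g ∈ G, (∀ b ∈ B', g b = b) → g = 1 := by
  classical
  let β := Module.finBasis F K
  refine ⟨coeffsLeft β B, ?_, fun g hg hfix => hB g hg fun b hb => ?_⟩
  · simpa [hBc, hi] using card_coeffsLeft_le β B
  · rw [LinearMap.baseChange_eq_ltensor]
    exact lTensor_apply_eq_self_of_forall_mem_coeffsLeft β (g : V →ₗ[F] V) B hfix b hb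

/-- Let `F ⊆ K` be a field extension of finite degree `i`, let `V` be a
finite-dimensional `F`-vector space and `G ≤ GL(V)`, acting on `K ⊗[F] V` by base
change. If `G` has a base of size `c` on `K ⊗[F] V`, then `G` has a base of size at
most `c * i` on `V`. -/
theorem stmt_10 (F K : Type*) [Field F] [Field K] [Algebra F K]
    [FiniteDimensional F K] (i : ℕ) (hi : Module.finrank F K = i)
    (V : Type*) [AddCommGroup V] [Module F V] [FiniteDimensional F V]
    (G : Subgroup (V ≃ₗ[F] V))
    (c : ℕ) (B : Finset (TensorProduct F K V)) (hBc : B.card = c)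
    (hB : ∀ g ∈ G, (∀ b ∈ B, LinearMap.baseChange K (g : V →ₗ[F] V) b = b) → g = 1) :
    ∃ B' : Finset V, B'.card ≤ c * i ∧ ∀ g ∈ G, (∀ b ∈ B', g b = b) → g = 1 :=
  stmt_10_general F K i hi V G c B hBc hB
end
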